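/- arXiv:2603.14037 — 4 statements merged into one kernel-verified Lean document; each statement's English description precedes it below -/
import Mathlib

section
/- Under the stated assumptions, for all ℓ, h ∈ (0,1]: (i) for every x ∈ I₀, almost surely |b̂*_{ℓ,h}(x) − b̂_{ℓ,h}(x)| · 1_{Ω_{b̂}} ≤ 2 |b̂(l_ε) − b(l_ε)| + |b̂(r_ε) − b(r_ε)|; and consequently (ii) E( 1_{Ω_{b̂}} ∫_{I₀} |b̂*_{ℓ,h}(x) − b̂_{ℓ,h}(x)| dx ) ≤ 3 (r₀ − l₀) 𝔯(b̂)^{1/2}. -/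
/-!
With `T_η(s) = ∫_s^∞ K_η` the tail of the rescaled kernel, `∫_{-∞}^t K_η(c - y) dy = T_η(c - t)`,
so both estimators have the form `lo + ∫_{lo}^{hi} F` with the same `F(z) = T_ℓ(x - 𝔟̂_h⁻¹(z))`
and endpoints `(lo, hi) = (b(r_ε), b(l_ε))`, resp. `(b̂(r_ε), b̂(l_ε))`. As `0 ≤ F ≤ 1`, this
expression is `1`-Lipschitz in each endpoint, which gives (i) for every `ω`. Integrating over `I₀`
and taking expectations, (ii) follows from `E|b̂(x) - b(x)| ≤ 𝔯(b̂)^{1/2}` at `x = l_ε, r_ε`.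
Measurability of the integrands comes for free from monotonicity: `T_η` is antitone, hence so
is `𝔟̂_h⁻¹`.
-/

open MeasureTheory

/-- The rescaled kernel `K_η(x) = η⁻¹ K(x/η)`. -/
noncomputable def Kh (K : ℝ → ℝ) (η x : ℝ) : ℝ := η⁻¹ * K (x / η)

/-- The estimator `𝔟̂_h⁻¹(w) = l₀ - 2ε + ∫_{I_{2ε}} ∫_{-∞}^{-w} K_h(-g(z) - y) dy dz`
of the inverse of `b`, computed from an estimation `g` of `b`. -/
noncomputable def binvEst (K : ℝ → ℝ) (l₀ r₀ ε h : ℝ) (g : ℝ → ℝ) (w : ℝ) : ℝ :=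
  (l₀ - 2 * ε) +
    ∫ z in Set.Icc (l₀ - 2 * ε) (r₀ + 2 * ε), ∫ y in Set.Iic (-w), Kh K h (-(g z) - y)

/-- The strictly decreasing estimator
`lo + ∫_{lo}^{hi} ∫_{-∞}^{-x} K_ℓ(-𝔟̂_h⁻¹(z) - y) dy dz`. -/
noncomputable def monoEst (K : ℝ → ℝ) (l₀ r₀ ε ℓ h lo hi : ℝ) (g : ℝ → ℝ) (x : ℝ) : ℝ :=
  lo + ∫ z in lo..hi, ∫ y in Set.Iic (-x), Kh K ℓ (-(binvEst K l₀ r₀ ε h g z) - y)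

open Set

theorem setIntegral_Iic_comp_sub_left {E : Type*} [NormedAddCommGroup E] [NormedSpace ℝ E]
    (f : ℝ → E) (c t : ℝ) : ∫ y in Iic t, f (c - y) = ∫ u in Ici (c - t), f u := by
  have hpre : (fun y => c - y) ⁻¹' Ici (c - t) = Iic t := by
    ext y; simp
  rw [← hpre]
  exact (volume.measurePreserving_sub_left c).setIntegral_preimage_emb
    (MeasurableEquiv.subLeft c).measurableEmbedding f _

section kernel
variable {K : ℝ → ℝ} {η : ℝ}

theorem Kh_nonneg (hK0 : ∀ y, 0 ≤ K y) (hη : 0 ≤ η) (x : ℝ) : 0 ≤ Kh K η x :=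
  mul_nonneg (inv_nonneg.2 hη) (hK0 _)

theorem integrable_Kh (hKint : ∫ y, K y = 1) (hη : η ≠ 0) : Integrable (Kh K η) :=
  ((Integrable.of_integral_ne_zero (by simp [hKint])).comp_div hη).const_mul η⁻¹

theorem integral_Kh (hKint : ∫ y, K y = 1) (hη : 0 < η) : ∫ x, Kh K η x = 1 := by
  simp only [Kh]
  rw [integral_const_mul, Measure.integral_comp_div, hKint, abs_of_pos hη, smul_eq_mul,
    mul_one, inv_mul_cancel₀ hη.ne']

end kernel

noncomputable def kernelTail (K : ℝ → ℝ) (η s : ℝ) : ℝ := ∫ u in Ici s, Kh K η u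

section kernelTail
variable {K : ℝ → ℝ} {η : ℝ}

theorem setIntegral_Iic_Kh_sub (c t : ℝ) :
    ∫ y in Iic t, Kh K η (c - y) = kernelTail K η (c - t) :=
  setIntegral_Iic_comp_sub_left _ c t

theorem kernelTail_mem_Icc (hK0 : ∀ y, 0 ≤ K y) (hKint : ∫ y, K y = 1) (hη : 0 < η)
    (s : ℝ) : kernelTail K η s ∈ Icc 0 1 := by
  refine ⟨setIntegral_nonneg measurableSet_Ici fun u _ => Kh_nonneg hK0 hη.le u, ?_⟩
  calc kernelTail K η s ≤ ∫ u, Kh K η u :=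
        setIntegral_le_integral (integrable_Kh hKint hη.ne') (.of_forall (Kh_nonneg hK0 hη.le))
    _ = 1 := integral_Kh hKint hη

theorem antitone_kernelTail (hK0 : ∀ y, 0 ≤ K y) (hKint : ∫ y, K y = 1) (hη : 0 < η) :
    Antitone (kernelTail K η) := fun _ _ hst =>
  setIntegral_mono_set (integrable_Kh hKint hη.ne').integrableOn
    (.of_forall (Kh_nonneg hK0 hη.le)) (Ici_subset_Ici.2 hst).eventuallyLE

theorem integrableOn_kernelTail_comp (hK0 : ∀ y, 0 ≤ K y) (hKint : ∫ y, K y = 1) (hη : 0 < η)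
    {f : ℝ → ℝ} (hf : Measurable f) {s : Set ℝ} (hs : volume s ≠ ⊤) :
    IntegrableOn (fun z => kernelTail K η (f z)) s := by
  refine Measure.integrableOn_of_bounded (M := 1) hs
    ((antitone_kernelTail hK0 hKint hη).measurable.comp hf).aestronglyMeasurable
    (.of_forall fun z => ?_)
  have := kernelTail_mem_Icc hK0 hKint hη (f z)
  rw [Real.norm_eq_abs, abs_of_nonneg this.1]
  exact this.2

end kernelTail

theorem abs_add_intervalIntegral_sub_le {F : ℝ → ℝ} (hFm : Measurable F)
    (hF : ∀ z, F z ∈ Icc 0 1) (lo hi lo' hi' : ℝ) :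
    |(lo' + ∫ z in lo'..hi', F z) - (lo + ∫ z in lo..hi, F z)| ≤ |lo' - lo| + |hi' - hi| := by
  have hFi : ∀ a b : ℝ, IntervalIntegrable F volume a b := fun a b =>
    (intervalIntegrable_const (c := (1 : ℝ))).mono_fun hFm.aestronglyMeasurable
      (.of_forall fun z => by
        simpa [abs_of_nonneg (hF z).1] using (hF z).2)
  have hsplit : (lo' + ∫ z in lo'..hi', F z) - (lo + ∫ z in lo..hi, F z) =
      (∫ z in lo..lo', (1 - F z)) + ∫ z in hi..hi', F z := by
    rw [intervalIntegral.integral_sub intervalIntegrable_const (hFi lo lo'),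
      intervalIntegral.integral_const, smul_eq_mul, mul_one, add_sub_add_comm,
      intervalIntegral.integral_interval_sub_interval_comm' (hFi _ _) (hFi _ _) (hFi _ _)]
    ring
  have hbound : ∀ {f : ℝ → ℝ} (a b : ℝ), (∀ z, f z ∈ Icc (-1) 1) →
      |∫ z in a..b, f z| ≤ |b - a| := fun a b hf => by
    simpa using intervalIntegral.norm_integral_le_of_norm_le_const (C := 1) (a := a) (b := b)
      fun z _ => (Real.norm_eq_abs _).trans_le (abs_le.2 (hf z))
  rw [hsplit]
  refine (abs_add_le _ _).trans (add_le_add (hbound _ _ fun z => ?_) (hbound _ _ fun z => ?_))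
  all_goals constructor <;> linarith [(hF z).1, (hF z).2]

section estimators
variable {K : ℝ → ℝ} {l₀ r₀ ε h ℓ : ℝ}

theorem binvEst_eq_add_integral_kernelTail (g : ℝ → ℝ) (w : ℝ) : binvEst K l₀ r₀ ε h g w =
    (l₀ - 2 * ε) + ∫ z in Icc (l₀ - 2 * ε) (r₀ + 2 * ε), kernelTail K h (w - g z) := by
  simp only [binvEst, setIntegral_Iic_Kh_sub, neg_sub_neg]

theorem monoEst_eq_add_integral_kernelTail (lo hi : ℝ) (g : ℝ → ℝ) (x : ℝ) :
    monoEst K l₀ r₀ ε ℓ h lo hi g x =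
    lo + ∫ z in lo..hi, kernelTail K ℓ (x - binvEst K l₀ r₀ ε h g z) := by
  simp only [monoEst, setIntegral_Iic_Kh_sub, neg_sub_neg]

theorem antitone_binvEst (hK0 : ∀ y, 0 ≤ K y) (hKint : ∫ y, K y = 1) (hh : 0 < h)
    {g : ℝ → ℝ} (hg : Measurable g) : Antitone (binvEst K l₀ r₀ ε h g) := by
  intro w₁ w₂ hw
  simp only [binvEst_eq_add_integral_kernelTail]
  have hint : ∀ w, IntegrableOn (fun z => kernelTail K h (w - g z))
      (Icc (l₀ - 2 * ε) (r₀ + 2 * ε)) := fun w =>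
    integrableOn_kernelTail_comp hK0 hKint hh (measurable_const.sub hg) measure_Icc_lt_top.ne
  exact add_le_add_right (setIntegral_mono (hint w₂) (hint w₁)
    fun z => antitone_kernelTail hK0 hKint hh (sub_le_sub_right hw _)) _

theorem abs_monoEst_sub_le (hK0 : ∀ y, 0 ≤ K y) (hKint : ∫ y, K y = 1) (hℓ : 0 < ℓ)
    (hh : 0 < h) {g : ℝ → ℝ} (hg : Measurable g) (lo hi lo' hi' x : ℝ) :
    |monoEst K l₀ r₀ ε ℓ h lo' hi' g x - monoEst K l₀ r₀ ε ℓ h lo hi g x| ≤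
      |lo' - lo| + |hi' - hi| := by
  simp only [monoEst_eq_add_integral_kernelTail]
  have hmono : Antitone fun z => kernelTail K ℓ (x - binvEst K l₀ r₀ ε h g z) :=
    fun z₁ z₂ hz => antitone_kernelTail hK0 hKint hℓ
      (sub_le_sub_left (antitone_binvEst hK0 hKint hh hg hz) x)
  exact abs_add_intervalIntegral_sub_le hmono.measurable
    (fun z => kernelTail_mem_Icc hK0 hKint hℓ _) lo hi lo' hi'

theorem setIntegral_abs_monoEst_sub_le (hK0 : ∀ y, 0 ≤ K y) (hKint : ∫ y, K y = 1)
    (hℓ : 0 < ℓ) (hh : 0 < h) {g : ℝ → ℝ} (hg : Measurable g) {a b : ℝ} (hab : a ≤ b)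
    (lo hi lo' hi' : ℝ) :
    ∫ x in Icc a b, |monoEst K l₀ r₀ ε ℓ h lo' hi' g x - monoEst K l₀ r₀ ε ℓ h lo hi g x| ≤
      (b - a) * (|lo' - lo| + |hi' - hi|) := by
  refine (integral_mono_of_nonneg (.of_forall fun _ => abs_nonneg _) (integrable_const _)
    (.of_forall fun x => abs_monoEst_sub_le hK0 hKint hℓ hh hg lo hi lo' hi' x)).trans_eq ?_
  rw [setIntegral_const, Real.volume_real_Icc_of_le hab, smul_eq_mul]

end estimators

theorem integral_abs_le_sqrt_of_integral_sq_le {Ω : Type*} [MeasurableSpace Ω] {P : Measure Ω}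
    [IsProbabilityMeasure P] {X : Ω → ℝ} (hX : MemLp X 2 P) {r : ℝ}
    (hr : ∫ ω, X ω ^ 2 ∂P ≤ r) : ∫ ω, |X ω| ∂P ≤ √r := by
  have hvar := ProbabilityTheory.variance_nonneg |X| P
  rw [ProbabilityTheory.variance_eq_sub hX.abs] at hvar
  simp only [Pi.pow_apply, Pi.abs_apply, sq_abs] at hvar
  exact (le_abs_self _).trans (Real.abs_le_sqrt (by linarith))

theorem stmt9_general (l₀ r₀ ε mb : ℝ) (K b : ℝ → ℝ)
    (hlr : l₀ < r₀) (hε : 0 < ε)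
    -- kernel assumptions
    (hK0 : ∀ y, 0 ≤ K y) (hKint : ∫ y, K y = 1)
    -- the probability space and the estimator `b̂`
    (Ω : Type) [MeasurableSpace Ω] (P : Measure Ω) [IsProbabilityMeasure P]
    (bhat : Ω → ℝ → ℝ) (hbhat : Measurable (Function.uncurry bhat))
    -- `𝔯` is an upper bound of the pointwise `L²`-risk on `I_{2ε}` (assumed finite)
    (𝔯 : ℝ) (h𝔯 : ∀ x ∈ Set.Icc (l₀ - 2 * ε) (r₀ + 2 * ε),
      (∫ ω, |bhat ω x - b x| ^ 2 ∂P) ≤ 𝔯)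
    (hsq : ∀ x ∈ Set.Icc (l₀ - 2 * ε) (r₀ + 2 * ε),
      Integrable (fun ω => |bhat ω x - b x| ^ 2) P)
    -- the bandwidths
    (ℓ h : ℝ) (hℓ0 : 0 < ℓ) (hh0 : 0 < h) :
    -- (i) pointwise (almost sure) bound
    (∀ x ∈ Set.Icc l₀ r₀, ∀ᵐ ω ∂P,
      Set.indicator
          {ω' : Ω | bhat ω' (r₀ + ε) - bhat ω' (l₀ - ε) ≤
            -(mb / 2) * ((r₀ + ε) - (l₀ - ε))}
          (fun ω' =>
            |monoEst K l₀ r₀ ε ℓ h (bhat ω' (r₀ + ε)) (bhat ω' (l₀ - ε)) (bhat ω') x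
              - monoEst K l₀ r₀ ε ℓ h (b (r₀ + ε)) (b (l₀ - ε)) (bhat ω') x|) ω ≤
        2 * |bhat ω (l₀ - ε) - b (l₀ - ε)| + |bhat ω (r₀ + ε) - b (r₀ + ε)|) ∧
    -- (ii) integrated bound
    (∫ ω, Set.indicator
        {ω' : Ω | bhat ω' (r₀ + ε) - bhat ω' (l₀ - ε) ≤
          -(mb / 2) * ((r₀ + ε) - (l₀ - ε))}
        (fun ω' => ∫ x in Set.Icc l₀ r₀,
          |monoEst K l₀ r₀ ε ℓ h (bhat ω' (r₀ + ε)) (bhat ω' (l₀ - ε)) (bhat ω') x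
            - monoEst K l₀ r₀ ε ℓ h (b (r₀ + ε)) (b (l₀ - ε)) (bhat ω') x|) ω ∂P) ≤
      3 * (r₀ - l₀) * Real.sqrt 𝔯 := by
  set Δ : ℝ → Ω → ℝ := fun x ω => |bhat ω x - b x|
  have hsec : ∀ ω, Measurable (bhat ω) := fun ω => hbhat.comp measurable_prodMk_left
  have hrisk : ∀ x ∈ Icc (l₀ - 2 * ε) (r₀ + 2 * ε), Integrable (Δ x) P ∧ ∫ ω, Δ x ω ∂P ≤ √𝔯 := by
    intro x hx
    have hm : Measurable fun ω => bhat ω x - b x :=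
      (hbhat.comp measurable_prodMk_right).sub_const _
    have hL2 : MemLp (fun ω => bhat ω x - b x) 2 P :=
      (memLp_two_iff_integrable_sq hm.aestronglyMeasurable).2
        (by simpa only [sq_abs] using hsq x hx)
    exact ⟨(hL2.integrable one_le_two).abs,
      integral_abs_le_sqrt_of_integral_sq_le hL2 (by simpa only [sq_abs] using h𝔯 x hx)⟩
  obtain ⟨hrInt, hr⟩ := hrisk (r₀ + ε) ⟨by linarith, by linarith⟩
  obtain ⟨hlInt, hl⟩ := hrisk (l₀ - ε) ⟨by linarith, by linarith⟩
  refine ⟨fun x _ => .of_forall fun ω => ?_, ?_⟩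
  · refine (indicator_le_self' (fun _ _ => abs_nonneg _) ω).trans
      ((abs_monoEst_sub_le hK0 hKint hℓ0 hh0 (hsec ω) _ _ _ _ x).trans ?_)
    linarith [abs_nonneg (bhat ω (l₀ - ε) - b (l₀ - ε))]
  calc _ ≤ ∫ ω, (r₀ - l₀) * (Δ (r₀ + ε) ω + Δ (l₀ - ε) ω) ∂P :=
        integral_mono_of_nonneg
          (.of_forall (indicator_nonneg fun _ _ => integral_nonneg fun _ => abs_nonneg _))
          ((hrInt.add hlInt).const_mul _)
          (.of_forall fun ω => (indicator_le_self' (fun _ _ => integral_nonneg fun _ =>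
            abs_nonneg _) ω).trans
            (setIntegral_abs_monoEst_sub_le hK0 hKint hℓ0 hh0 (hsec ω) hlr.le _ _ _ _))
    _ = (r₀ - l₀) * (∫ ω, Δ (r₀ + ε) ω ∂P + ∫ ω, Δ (l₀ - ε) ω ∂P) := by
        rw [integral_const_mul, integral_add hrInt hlInt]
    _ ≤ 3 * (r₀ - l₀) * √𝔯 := by nlinarith [Real.sqrt_nonneg 𝔯]

/-- Bounds on `b̂*_{ℓ,h} - b̂_{ℓ,h}` on the event `Ω_{b̂}`. -/
theorem stmt9 (l₀ r₀ ε mb : ℝ) (K b b' : ℝ → ℝ)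
    (hlr : l₀ < r₀) (hε : 0 < ε) (hε1 : ε ≤ 1) (hmb : 0 < mb)
    -- kernel assumptions
    (hK0 : ∀ y, 0 ≤ K y) (hK2 : ContDiff ℝ 2 K) (hKsymm : ∀ y, K (-y) = K y)
    (hKsupp : ∀ y, 1 < |y| → K y = 0) (hKint : ∫ y, K y = 1)
    -- `b` is continuously differentiable on `I_{2ε}` with `b' ≤ -mb` there
    (hbd : ∀ x ∈ Set.Icc (l₀ - 2 * ε) (r₀ + 2 * ε), HasDerivAt b (b' x) x)
    (hb'c : ContinuousOn b' (Set.Icc (l₀ - 2 * ε) (r₀ + 2 * ε)))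
    (hb'le : ∀ x ∈ Set.Icc (l₀ - 2 * ε) (r₀ + 2 * ε), b' x ≤ -mb)
    -- the probability space and the estimator `b̂`
    (Ω : Type) [MeasurableSpace Ω] (P : Measure Ω) [IsProbabilityMeasure P]
    (bhat : Ω → ℝ → ℝ) (hbhat : Measurable (Function.uncurry bhat))
    -- `𝔯` is an upper bound of the pointwise `L²`-risk on `I_{2ε}` (assumed finite)
    (𝔯 : ℝ) (h𝔯 : ∀ x ∈ Set.Icc (l₀ - 2 * ε) (r₀ + 2 * ε),
      (∫ ω, |bhat ω x - b x| ^ 2 ∂P) ≤ 𝔯)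
    (hsq : ∀ x ∈ Set.Icc (l₀ - 2 * ε) (r₀ + 2 * ε),
      Integrable (fun ω => |bhat ω x - b x| ^ 2) P)
    -- the bandwidths
    (ℓ h : ℝ) (hℓ0 : 0 < ℓ) (hℓ1 : ℓ ≤ 1) (hh0 : 0 < h) (hh1 : h ≤ 1) :
    -- (i) pointwise (almost sure) bound
    (∀ x ∈ Set.Icc l₀ r₀, ∀ᵐ ω ∂P,
      Set.indicator
          {ω' : Ω | bhat ω' (r₀ + ε) - bhat ω' (l₀ - ε) ≤
            -(mb / 2) * ((r₀ + ε) - (l₀ - ε))}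
          (fun ω' =>
            |monoEst K l₀ r₀ ε ℓ h (bhat ω' (r₀ + ε)) (bhat ω' (l₀ - ε)) (bhat ω') x
              - monoEst K l₀ r₀ ε ℓ h (b (r₀ + ε)) (b (l₀ - ε)) (bhat ω') x|) ω ≤
        2 * |bhat ω (l₀ - ε) - b (l₀ - ε)| + |bhat ω (r₀ + ε) - b (r₀ + ε)|) ∧
    -- (ii) integrated bound
    (∫ ω, Set.indicator
        {ω' : Ω | bhat ω' (r₀ + ε) - bhat ω' (l₀ - ε) ≤
          -(mb / 2) * ((r₀ + ε) - (l₀ - ε))}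
        (fun ω' => ∫ x in Set.Icc l₀ r₀,
          |monoEst K l₀ r₀ ε ℓ h (bhat ω' (r₀ + ε)) (bhat ω' (l₀ - ε)) (bhat ω') x
            - monoEst K l₀ r₀ ε ℓ h (b (r₀ + ε)) (b (l₀ - ε)) (bhat ω') x|) ω ∂P) ≤
      3 * (r₀ - l₀) * Real.sqrt 𝔯 :=
  stmt9_general l₀ r₀ ε mb K b hlr hε hK0 hKint Ω P bhat hbhat 𝔯 h𝔯 hsq ℓ h hℓ0 hh0
end

section
/- Under the stated assumptions, for every x ∈ ℝ and η ∈ (0,1], the bias of the kernel occupation-density estimator satisfies |E(f̂_η(x)) − f(x)|² ≤ M_{f'}² η² ∫_{−∞}^{∞} y² K(y) dy. -/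
/-!
Taking expectations and using Fubini, `E f̂_η(x)` is the time average of
`E K_η(X_s - x) = ∫ K(z) f_s(x + ηz) dz`. Since `∫ K = 1`, the bias at time `s` is
`∫ K(z) (f_s(x + ηz) - f_s(x)) dz`, which the mean value theorem bounds by `M_{f'} η ∫ |z| K(z) dz`;
averaging in time keeps this bound, and squaring it, Jensen's inequality for the probability
density `K` gives `(∫ |z| K(z) dz)² ≤ ∫ z² K(z) dz`.
-/

open MeasureTheory

/-- The kernel occupation-density estimator
`f̂_η(x) = (1/(N T₀)) ∑_{i=1}^N ∫_{t₀}^T K_η(Xⁱ_s - x) ds`. -/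
noncomputable def densEst {Ω : Type*} (K : ℝ → ℝ) (t₀ T η : ℝ) (N : ℕ)
    (X : Fin N → ℝ → Ω → ℝ) (x : ℝ) (ω : Ω) : ℝ :=
  (1 / (N * (T - t₀))) * ∑ i, ∫ s in t₀..T, Kh K η (X i s ω - x)

open Set

lemma hasCompactSupport_of_forall_one_lt_abs {K : ℝ → ℝ} (hK : ∀ y, 1 < |y| → K y = 0) :
    HasCompactSupport K :=
  HasCompactSupport.of_support_subset_isCompact (isCompact_closedBall (0 : ℝ) 1) fun y hy => by
    by_contra hy'
    exact hy (hK y (by simpa [Real.dist_eq] using hy'))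

theorem sq_integral_mul_le_integral_sq_mul {α : Type*} [MeasurableSpace α] {μ : Measure α}
    {w g : α → ℝ} (hw0 : ∀ a, 0 ≤ w a) (hw1 : ∫ a, w a ∂μ = 1)
    (hgw : Integrable (fun a => g a * w a) μ) (hg2w : Integrable (fun a => g a ^ 2 * w a) μ) :
    (∫ a, g a * w a ∂μ) ^ 2 ≤ ∫ a, g a ^ 2 * w a ∂μ := by
  set m := ∫ a, g a * w a ∂μ
  have hw : Integrable w μ := Integrable.of_integral_ne_zero (by rw [hw1]; exact one_ne_zero)
  have hvar : 0 ≤ ∫ a, (g a - m) ^ 2 * w a ∂μ :=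
    integral_nonneg fun a => mul_nonneg (sq_nonneg _) (hw0 a)
  have hexpand : ∫ a, (g a - m) ^ 2 * w a ∂μ = (∫ a, g a ^ 2 * w a ∂μ) - 2 * m * m + m ^ 2 := by
    have hsplit : (fun a => (g a - m) ^ 2 * w a)
        = fun a => g a ^ 2 * w a - 2 * m * (g a * w a) + m ^ 2 * w a := by
      funext a; ring
    have hint : Integrable (fun a => g a ^ 2 * w a - 2 * m * (g a * w a)) μ :=
      hg2w.sub (hgw.const_mul _)
    rw [hsplit, integral_add hint (hw.const_mul _), integral_sub hg2w (hgw.const_mul _),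
      integral_const_mul, integral_const_mul, hw1, mul_one]
  nlinarith

section Kernel

variable {K : ℝ → ℝ} {η : ℝ}

lemma continuous_Kh (hK : Continuous K) : Continuous (Kh K η) := by
  unfold Kh; fun_prop

lemma hasCompactSupport_Kh (hK : HasCompactSupport K) (hη : η ≠ 0) :
    HasCompactSupport (Kh K η) := by
  have hcomp : HasCompactSupport fun u => K (u / η) := by
    simpa only [smul_eq_mul, inv_mul_eq_div] using hK.comp_smul (inv_ne_zero hη)
  exact hcomp.mul_left

lemma integral_mul_Kh_sub (K g : ℝ → ℝ) (hη : 0 < η) (x : ℝ) :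
    ∫ y, g y * Kh K η (y - x) = ∫ z, K z * g (x + η * z) := by
  have hpt : ∀ y, g y * Kh K η (y - x) = η⁻¹ * (fun z => K z * g (x + η * z)) ((y - x) / η) := by
    intro y
    have hy : x + η * ((y - x) / η) = y := by field_simp; ring
    simp only [Kh, hy]; ring
  simp_rw [hpt]
  rw [integral_const_mul, integral_sub_right_eq_self (fun u => K (u / η) * g (x + η * (u / η))) x,
    Measure.integral_comp_div (fun z => K z * g (x + η * z)), abs_of_pos hη, smul_eq_mul,
    ← mul_assoc, inv_mul_cancel₀ hη.ne', one_mul]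

end Kernel

lemma integral_comp_eq_integral_mul_density {Ω : Type*} [MeasurableSpace Ω] {P : Measure Ω}
    {Y : Ω → ℝ} (hY : Measurable Y) {g : ℝ → ℝ} (hg : Measurable g) (hg0 : ∀ y, 0 ≤ g y)
    (hlaw : P.map Y = volume.withDensity fun y => ENNReal.ofReal (g y))
    {F : ℝ → ℝ} (hF : Measurable F) :
    ∫ ω, F (Y ω) ∂P = ∫ y, g y * F y := by
  rw [← integral_map hY.aemeasurable hF.aestronglyMeasurable, hlaw,
    integral_withDensity_eq_integral_toReal_smul hg.ennreal_ofReal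
      (ae_of_all _ fun _ => ENNReal.ofReal_lt_top)]
  simp only [ENNReal.toReal_ofReal (hg0 _), smul_eq_mul]

theorem abs_integral_mul_comp_sub_le {K f f' : ℝ → ℝ} {L η : ℝ} (hKc : Continuous K)
    (hKcs : HasCompactSupport K) (hK0 : ∀ y, 0 ≤ K y) (hKint : ∫ y, K y = 1)
    (hf : ∀ y, HasDerivAt f (f' y) y) (hf' : ∀ y, |f' y| ≤ L) (hη : 0 ≤ η) (x : ℝ) :
    |(∫ z, K z * f (x + η * z)) - f x| ≤ L * η * ∫ z, |z| * K z := by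
  have hfc : Continuous f := continuous_iff_continuousAt.2 fun y => (hf y).continuousAt
  have hlip : ∀ b, |f b - f x| ≤ L * |b - x| := fun b => by
    simpa only [Real.norm_eq_abs] using convex_univ.norm_image_sub_le_of_norm_hasDerivWithin_le
      (fun y _ => (hf y).hasDerivWithinAt) (fun y _ => hf' y) (mem_univ x) (mem_univ b)
  have hdiff : (∫ z, K z * f (x + η * z)) - f x = ∫ z, K z * (f (x + η * z) - f x) := by
    have hcomp : Integrable fun z => K z * f (x + η * z) :=
      (hKc.mul (hfc.comp (by fun_prop))).integrable_of_hasCompactSupport hKcs.mul_right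
    have hconst : Integrable fun z => K z * f x :=
      (hKc.integrable_of_hasCompactSupport hKcs).mul_const _
    simp_rw [mul_sub]
    rw [integral_sub hcomp hconst, integral_mul_const, hKint, one_mul]
  have hpt : ∀ z, ‖K z * (f (x + η * z) - f x)‖ ≤ L * η * (|z| * K z) := fun z => by
    rw [Real.norm_eq_abs, abs_mul, abs_of_nonneg (hK0 z)]
    calc K z * |f (x + η * z) - f x| ≤ K z * (L * |x + η * z - x|) :=
          mul_le_mul_of_nonneg_left (hlip _) (hK0 z)
      _ = L * η * (|z| * K z) := by
          rw [add_sub_cancel_left, abs_mul, abs_of_nonneg hη]; ring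
  have hint : Integrable (fun z => L * η * (|z| * K z)) :=
    ((continuous_abs.mul hKc).integrable_of_hasCompactSupport hKcs.mul_left).const_mul _
  rw [hdiff, ← integral_const_mul, ← Real.norm_eq_abs]
  exact norm_integral_le_of_norm_le hint (ae_of_all _ hpt)

lemma abs_intervalAverage_sub_le {g h : ℝ → ℝ} {a b c : ℝ} (hab : a < b)
    (hg : IntervalIntegrable g volume a b) (hh : AEStronglyMeasurable h (volume.restrict (Ioc a b)))
    (hgh : ∀ s ∈ Ioc a b, |g s - h s| ≤ c) :
    |1 / (b - a) * (∫ s in a..b, g s) - 1 / (b - a) * ∫ s in a..b, h s| ≤ c := by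
  have hgh' : IntervalIntegrable (fun s => g s - h s) volume a b := by
    rw [intervalIntegrable_iff_integrableOn_Ioc_of_le hab.le]
    exact Integrable.of_bound (hg.1.aestronglyMeasurable.sub hh) c
      ((ae_restrict_iff' measurableSet_Ioc).2 (ae_of_all _ hgh))
  have hh' : IntervalIntegrable h volume a b := by
    simpa only [sub_sub_cancel] using hg.sub hgh'
  have hint : ‖∫ s in a..b, g s - h s‖ ≤ c * |b - a| :=
    intervalIntegral.norm_integral_le_of_norm_le_const fun s hs =>
      hgh s (by rwa [uIoc_of_le hab.le] at hs)
  have hba : 0 < b - a := sub_pos.2 hab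
  rw [← mul_sub, ← intervalIntegral.integral_sub hg hh', abs_mul, abs_of_pos (one_div_pos.2 hba),
    one_div_mul_eq_div, div_le_iff₀ hba]
  rwa [Real.norm_eq_abs, abs_of_pos hba] at hint

section Fubini

variable {Ω : Type*} [MeasurableSpace Ω] {P : Measure Ω} [IsFiniteMeasure P]
  {F : ℝ → ℝ} (hFc : Continuous F) (hFcs : HasCompactSupport F)
  {Y : ℝ → Ω → ℝ} (hY : Measurable (Function.uncurry Y)) {a b : ℝ}
include hFc hFcs hY

lemma integrable_uncurry_comp :
    Integrable (Function.uncurry fun s ω => F (Y s ω)) ((volume.restrict (Ioc a b)).prod P) := by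
  obtain ⟨C, hC⟩ := hFc.bounded_above_of_compact_support hFcs
  exact Integrable.of_bound (hFc.measurable.comp hY).aestronglyMeasurable C (ae_of_all _ fun _ => hC _)

lemma intervalIntegrable_integral_comp (hab : a ≤ b) :
    IntervalIntegrable (fun s => ∫ ω, F (Y s ω) ∂P) volume a b :=
  (intervalIntegrable_iff_integrableOn_Ioc_of_le hab).2
    (integrable_uncurry_comp hFc hFcs hY).integral_prod_left

lemma integrable_intervalIntegral_comp (hab : a ≤ b) :
    Integrable (fun ω => ∫ s in a..b, F (Y s ω)) P := by
  simp_rw [intervalIntegral.integral_of_le hab]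
  exact (integrable_uncurry_comp hFc hFcs hY).swap.integral_prod_left

lemma integral_intervalIntegral_comp (hab : a ≤ b) :
    ∫ ω, (∫ s in a..b, F (Y s ω)) ∂P = ∫ s in a..b, ∫ ω, F (Y s ω) ∂P := by
  simp_rw [intervalIntegral.integral_of_le hab]
  exact (integral_integral_swap (integrable_uncurry_comp hFc hFcs hY)).symm

end Fubini

lemma integral_densEst {Ω : Type*} [MeasurableSpace Ω] {P : Measure Ω} [IsFiniteMeasure P]
    {K : ℝ → ℝ} (hKc : Continuous K) (hKcs : HasCompactSupport K) {t₀ T η : ℝ} (htT : t₀ < T)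
    (hη : η ≠ 0) {N : ℕ} (hN : 0 < N) {X : Fin N → ℝ → Ω → ℝ}
    (hX : ∀ i, Measurable (Function.uncurry (X i))) (x : ℝ) {m : ℝ → ℝ}
    (hm : ∀ i, ∀ s ∈ Icc t₀ T, ∫ ω, Kh K η (X i s ω - x) ∂P = m s) :
    ∫ ω, densEst K t₀ T η N X x ω ∂P = 1 / (T - t₀) * ∫ s in t₀..T, m s := by
  have hKhc := continuous_Kh (η := η) hKc
  have hKhcs := hasCompactSupport_Kh hKcs hη
  have hY : ∀ i, Measurable (Function.uncurry fun s ω => X i s ω - x) :=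
    fun i => (hX i).sub_const x
  have hterm : ∀ i, ∫ ω, (∫ s in t₀..T, Kh K η (X i s ω - x)) ∂P = ∫ s in t₀..T, m s := fun i => by
    rw [integral_intervalIntegral_comp hKhc hKhcs (hY i) htT.le]
    exact intervalIntegral.integral_congr fun s hs => hm i s (by rwa [uIcc_of_le htT.le] at hs)
  unfold densEst
  rw [integral_const_mul,
    integral_finsetSum _ fun i _ => integrable_intervalIntegral_comp hKhc hKhcs (hY i) htT.le]
  simp only [hterm, Finset.sum_const, Finset.card_univ, Fintype.card_fin, nsmul_eq_mul]
  have hN' : (N : ℝ) ≠ 0 := Nat.cast_ne_zero.2 hN.ne'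
  field_simp

theorem stmt12_general (t₀ T : ℝ) (htT : t₀ < T)
    -- kernel assumptions
    (K : ℝ → ℝ) (hK0 : ∀ y, 0 ≤ K y) (hK2 : ContDiff ℝ 2 K)
    (hKsupp : ∀ y, 1 < |y| → K y = 0) (hKint : ∫ y, K y = 1)
    -- the probability space and the `N` copies of the process
    (Ω : Type) [MeasurableSpace Ω] (P : Measure Ω) [IsProbabilityMeasure P]
    (N : ℕ) (hN : 0 < N) (X : Fin N → ℝ → Ω → ℝ)
    (hXmeas : ∀ i, Measurable (Function.uncurry (X i)))
    -- the marginal densities `f_s` and their properties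
    (fs fs' : ℝ → ℝ → ℝ) (hfsmeas : Measurable (Function.uncurry fs))
    (hfs0 : ∀ s y, 0 ≤ fs s y)
    (hdens : ∀ i, ∀ s ∈ Set.Icc t₀ T,
      Measure.map (X i s) P = volume.withDensity (fun y => ENNReal.ofReal (fs s y)))
    (Mf' : ℝ)
    (hfs'd : ∀ s ∈ Set.Icc t₀ T, ∀ y, HasDerivAt (fs s) (fs' s y) y)
    (hMf' : ∀ s ∈ Set.Icc t₀ T, ∀ y, |fs' s y| ≤ Mf')
    -- the point and the bandwidth
    (x η : ℝ) (hη0 : 0 < η) :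
    |(∫ ω, densEst K t₀ T η N X x ω ∂P) - (1 / (T - t₀)) * ∫ s in t₀..T, fs s x| ^ 2 ≤
      Mf' ^ 2 * η ^ 2 * ∫ y, y ^ 2 * K y := by
  have hKc : Continuous K := hK2.continuous
  have hKcs := hasCompactSupport_of_forall_one_lt_abs hKsupp
  set m : ℝ → ℝ := fun s => ∫ z, K z * fs s (x + η * z)
  have hmean : ∀ i, ∀ s ∈ Icc t₀ T, ∫ ω, Kh K η (X i s ω - x) ∂P = m s := fun i s hs =>
    (integral_comp_eq_integral_mul_density ((hXmeas i).comp measurable_prodMk_left)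
      (hfsmeas.comp measurable_prodMk_left) (hfs0 s) (hdens i s hs)
      ((continuous_Kh hKc).measurable.comp (measurable_sub_const x))).trans
      (integral_mul_Kh_sub K _ hη0 x)
  have hm : IntervalIntegrable m volume t₀ T :=
    (intervalIntegrable_integral_comp (continuous_Kh hKc) (hasCompactSupport_Kh hKcs hη0.ne')
      ((hXmeas ⟨0, hN⟩).sub_const x) htT.le).congr fun s hs =>
      hmean ⟨0, hN⟩ s (Ioc_subset_Icc_self (by rwa [uIoc_of_le htT.le] at hs))
  have hbias : ∀ s ∈ Ioc t₀ T, |m s - fs s x| ≤ Mf' * η * ∫ z, |z| * K z := fun s hs =>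
    abs_integral_mul_comp_sub_le hKc hKcs hK0 hKint (hfs'd s (Ioc_subset_Icc_self hs))
      (hMf' s (Ioc_subset_Icc_self hs)) hη0.le x
  have hjensen : (∫ z, |z| * K z) ^ 2 ≤ ∫ z, z ^ 2 * K z := by
    simpa only [sq_abs] using sq_integral_mul_le_integral_sq_mul hK0 hKint
      ((continuous_abs.mul hKc).integrable_of_hasCompactSupport hKcs.mul_left)
      ((continuous_abs.pow 2 |>.mul hKc).integrable_of_hasCompactSupport hKcs.mul_left)
  rw [integral_densEst hKc hKcs htT hη0.ne' hN hXmeas x hmean]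
  calc _ ≤ (Mf' * η * ∫ z, |z| * K z) ^ 2 :=
        pow_le_pow_left₀ (abs_nonneg _) (abs_intervalAverage_sub_le htT hm
          (hfsmeas.comp (measurable_id.prodMk measurable_const)).aestronglyMeasurable hbias) 2
    _ = Mf' ^ 2 * η ^ 2 * (∫ z, |z| * K z) ^ 2 := by ring
    _ ≤ Mf' ^ 2 * η ^ 2 * ∫ y, y ^ 2 * K y := by gcongr

/-- Bias bound for the kernel occupation-density estimator. -/
theorem stmt12 (t₀ T : ℝ) (ht₀ : 0 < t₀) (htT : t₀ < T)
    -- kernel assumptions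
    (K : ℝ → ℝ) (hK0 : ∀ y, 0 ≤ K y) (hK2 : ContDiff ℝ 2 K) (hKsymm : ∀ y, K (-y) = K y)
    (hKsupp : ∀ y, 1 < |y| → K y = 0) (hKint : ∫ y, K y = 1)
    -- the probability space and the `N` copies of the process
    (Ω : Type) [MeasurableSpace Ω] (P : Measure Ω) [IsProbabilityMeasure P]
    (N : ℕ) (hN : 0 < N) (X : Fin N → ℝ → Ω → ℝ)
    (hXmeas : ∀ i, Measurable (Function.uncurry (X i)))
    -- the marginal densities `f_s` and their properties
    (fs fs' : ℝ → ℝ → ℝ) (hfsmeas : Measurable (Function.uncurry fs))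
    (hfs0 : ∀ s y, 0 ≤ fs s y)
    (hdens : ∀ i, ∀ s ∈ Set.Icc t₀ T,
      Measure.map (X i s) P = volume.withDensity (fun y => ENNReal.ofReal (fs s y)))
    (Mf Mf' : ℝ) (hMf : ∀ s ∈ Set.Icc t₀ T, ∀ y, fs s y ≤ Mf)
    (hfs'd : ∀ s ∈ Set.Icc t₀ T, ∀ y, HasDerivAt (fs s) (fs' s y) y)
    (hMf' : ∀ s ∈ Set.Icc t₀ T, ∀ y, |fs' s y| ≤ Mf')
    -- the point and the bandwidth
    (x η : ℝ) (hη0 : 0 < η) (hη1 : η ≤ 1) :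
    |(∫ ω, densEst K t₀ T η N X x ω ∂P) - (1 / (T - t₀)) * ∫ s in t₀..T, fs s x| ^ 2 ≤
      Mf' ^ 2 * η ^ 2 * ∫ y, y ^ 2 * K y :=
  stmt12_general t₀ T htT K hK0 hK2 hKsupp hKint Ω P N hN X hXmeas fs fs' hfsmeas hfs0 hdens Mf'
    hfs'd hMf' x η hη0
end

section
/- Under the stated assumptions, for every x ∈ ℝ and η ∈ (0,1], the variance of the kernel occupation-density estimator satisfies Var(f̂_η(x)) ≤ M_f ‖K‖_{L²}² / (N η). -/
open MeasureTheory ProbabilityTheory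
open scoped NNReal ENNReal

private lemma intOfBdd {α : Type*} [MeasurableSpace α] {μ : Measure α} [IsFiniteMeasure μ]
    {f : α → ℝ} (hm : AEStronglyMeasurable f μ) {C : ℝ} (h : ∀ a, |f a| ≤ C) :
    Integrable f μ :=
  (integrable_const C).mono' hm (Filter.Eventually.of_forall fun a => by
    simpa [Real.norm_eq_abs] using h a)

/-- Variance bound for the kernel occupation-density estimator. -/
theorem stmt13 (t₀ T : ℝ) (ht₀ : 0 < t₀) (htT : t₀ < T)
    -- kernel assumptions
    (K : ℝ → ℝ) (hK0 : ∀ y, 0 ≤ K y) (hK2 : ContDiff ℝ 2 K) (hKsymm : ∀ y, K (-y) = K y)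
    (hKsupp : ∀ y, 1 < |y| → K y = 0) (hKint : ∫ y, K y = 1)
    -- the probability space and the `N` independent copies of the process
    (Ω : Type) [MeasurableSpace Ω] (P : Measure Ω) [IsProbabilityMeasure P]
    (N : ℕ) (hN : 0 < N) (X : Fin N → ℝ → Ω → ℝ)
    (hXmeas : ∀ i, Measurable (Function.uncurry (X i)))
    (hindep : iIndepFun
      (fun i ω s => X i s ω) P)
    (hident : ∀ i j, IdentDistrib (fun ω s => X i s ω) (fun ω s => X j s ω) P P)
    -- the marginal densities `f_s` and their properties
    (fs : ℝ → ℝ → ℝ) (hfsmeas : Measurable (Function.uncurry fs))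
    (hfs0 : ∀ s y, 0 ≤ fs s y)
    (hdens : ∀ i, ∀ s ∈ Set.Icc t₀ T,
      Measure.map (X i s) P = volume.withDensity (fun y => ENNReal.ofReal (fs s y)))
    (Mf : ℝ) (hMf : ∀ s ∈ Set.Icc t₀ T, ∀ y, fs s y ≤ Mf)
    -- the point and the bandwidth
    (x η : ℝ) (hη0 : 0 < η) (hη1 : η ≤ 1) :
    variance (densEst K t₀ T η N X x) P ≤ Mf * (∫ y, K y ^ 2) / (N * η) := by
  -- basic setup
  set T₀ : ℝ := T - t₀ with hT₀def
  have hT₀ : 0 < T₀ := sub_pos.2 htT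
  set ν : Measure ℝ := volume.restrict (Set.Ioc t₀ T) with hνdef
  have hνuniv : ν Set.univ = ENNReal.ofReal T₀ := by
    simp [hνdef, Measure.restrict_apply_univ, Real.volume_Ioc]
    rfl
  haveI : IsFiniteMeasure ν := ⟨by rw [hνuniv]; exact ENNReal.ofReal_lt_top⟩
  have hνunivR : (ν Set.univ).toReal = T₀ := by rw [hνuniv, ENNReal.toReal_ofReal hT₀.le]
  have hKcont : Continuous K := hK2.continuous
  have hKcomp : HasCompactSupport K := by
    apply HasCompactSupport.intro (isCompact_Icc (a := (-1:ℝ)) (b := 1))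
    intro y hy
    apply hKsupp
    simp only [Set.mem_Icc, not_and_or, not_le] at hy
    rw [lt_abs]
    rcases hy with h | h
    · right; linarith
    · left; exact h
  obtain ⟨C, hC'⟩ := hKcont.bounded_above_of_compact_support hKcomp
  have hC : ∀ y, K y ≤ C := fun y => by
    have := hC' y; rw [Real.norm_eq_abs, abs_of_nonneg (hK0 y)] at this; exact this
  have hC0 : 0 ≤ C := (hK0 0).trans (hC 0)
  -- the localized kernel g
  set g : ℝ → ℝ := fun y => η⁻¹ * K ((y - x) / η) with hgdef
  have hgcont : Continuous g := by
    apply continuous_const.mul (hKcont.comp (by fun_prop))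
  have hg0 : ∀ y, 0 ≤ g y := fun y => mul_nonneg (inv_nonneg.2 hη0.le) (hK0 _)
  set Cg : ℝ := η⁻¹ * C with hCgdef
  have hCg0 : 0 ≤ Cg := mul_nonneg (inv_nonneg.2 hη0.le) hC0
  have hgC : ∀ y, g y ≤ Cg := fun y =>
    mul_le_mul_of_nonneg_left (hC _) (inv_nonneg.2 hη0.le)
  have hgabs : ∀ y, |g y| ≤ Cg := fun y => by
    rw [abs_of_nonneg (hg0 y)]; exact hgC y
  have hgcomp : HasCompactSupport g := by
    apply HasCompactSupport.intro (isCompact_Icc (a := x - η) (b := x + η))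
    intro y hy
    have h1 : 1 < |(y - x) / η| := by
      simp only [Set.mem_Icc, not_and_or, not_le] at hy
      rw [abs_div, abs_of_pos hη0, lt_div_iff₀ hη0, one_mul, lt_abs]
      rcases hy with h | h
      · right; linarith
      · left; linarith
    simp [hgdef, hKsupp _ h1]
  have hg2int : Integrable (fun y => g y ^ 2) := by
    have : HasCompactSupport (fun y => g y ^ 2) := by
      have := hgcomp.comp_left (g := fun t : ℝ => t ^ 2) (by norm_num)
      exact this
    exact (hgcont.pow 2).integrable_of_hasCompactSupport this
  have hIg2nn : 0 ≤ ∫ y, g y ^ 2 := integral_nonneg fun y => sq_nonneg _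
  -- value of ∫ g²
  have hIg2 : ∫ y, g y ^ 2 = (∫ y, K y ^ 2) / η := by
    have h1 : ∀ y : ℝ, g y ^ 2 = η⁻¹ ^ 2 * K ((y - x) / η) ^ 2 := fun y => by
      rw [hgdef]; ring
    simp_rw [h1]
    rw [integral_const_mul]
    have h2 : (∫ y : ℝ, K ((y - x) / η) ^ 2) = ∫ u : ℝ, K (u / η) ^ 2 :=
      integral_sub_right_eq_self (fun u => K (u / η) ^ 2) x
    have h3 : (∫ u : ℝ, K (u / η) ^ 2) = |η| • ∫ u, K u ^ 2 :=
      Measure.integral_comp_div (fun u => K u ^ 2) η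
    rw [h2, h3, abs_of_pos hη0, smul_eq_mul]
    field_simp
  -- measurability of processes
  have hXsm : ∀ i s, Measurable fun ω => X i s ω := fun i s =>
    (hXmeas i).comp measurable_prodMk_left
  have hGm : ∀ i, Measurable fun p : ℝ × Ω => g (X i p.1 p.2) := fun i =>
    hgcont.measurable.comp (hXmeas i)
  have hGsm : ∀ i s, Measurable fun ω => g (X i s ω) := fun i s =>
    hgcont.measurable.comp (hXsm i s)
  -- the per-copy occupation integral
  set Y : Fin N → Ω → ℝ := fun i ω => ∫ s, g (X i s ω) ∂ν with hYdef
  have hYsm : ∀ i, StronglyMeasurable (Y i) := by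
    intro i
    have : StronglyMeasurable (Function.uncurry fun (ω : Ω) (s : ℝ) => g (X i s ω)) :=
      ((hGm i).comp measurable_swap).stronglyMeasurable
    exact this.integral_prod_right
  have hYb : ∀ i ω, |Y i ω| ≤ Cg * T₀ := by
    intro i ω
    have := norm_integral_le_of_norm_le_const (μ := ν)
      (f := fun s => g (X i s ω)) (C := Cg)
      (Filter.Eventually.of_forall fun s => by simpa [Real.norm_eq_abs] using hgabs _)
    rw [Real.norm_eq_abs] at this
    calc |Y i ω| ≤ Cg * (ν Set.univ).toReal := this
    _ = Cg * T₀ := by rw [hνunivR]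
  have hYint : ∀ i, Integrable (Y i) P := fun i =>
    intOfBdd (hYsm i).aestronglyMeasurable (hYb i)
  have hYYint : ∀ i j, Integrable (fun ω => Y i ω * Y j ω) P := fun i j => by
    apply intOfBdd (((hYsm i).mul (hYsm j)).aestronglyMeasurable) (C := (Cg * T₀) ^ 2)
    intro ω
    show |Y i ω * Y j ω| ≤ (Cg * T₀) ^ 2
    rw [abs_mul, sq]
    exact mul_le_mul (hYb i ω) (hYb j ω) (abs_nonneg _) (mul_nonneg hCg0 hT₀.le)
  -- second moment bound at a fixed time
  have hMf0 : 0 ≤ Mf := (hfs0 t₀ 0).trans (hMf t₀ ⟨le_refl _, htT.le⟩ 0)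
  have hmom2 : ∀ i, ∀ s ∈ Set.Icc t₀ T, ∫ ω, g (X i s ω) ^ 2 ∂P ≤ Mf * ∫ y, g y ^ 2 := by
    intro i s hs
    have h1 : ∫ ω, g (X i s ω) ^ 2 ∂P = ∫ y, g y ^ 2 ∂(Measure.map (X i s) P) :=
      (integral_map (hXsm i s).aemeasurable
        ((hgcont.pow 2).aestronglyMeasurable)).symm
    rw [h1, hdens i s hs]
    have hfsm : Measurable fun y => Real.toNNReal (fs s y) :=
      (hfsmeas.comp measurable_prodMk_left).real_toNNReal
    have h2 : (fun y => ENNReal.ofReal (fs s y))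
        = fun y => ((Real.toNNReal (fs s y) : ℝ≥0) : ENNReal) := rfl
    rw [h2, integral_withDensity_eq_integral_smul hfsm]
    have h3 : ∀ y, Real.toNNReal (fs s y) • (g y ^ 2) = fs s y * g y ^ 2 := fun y => by
      rw [NNReal.smul_def, Real.coe_toNNReal _ (hfs0 s y), smul_eq_mul]
    simp_rw [h3]
    have h4 : ∫ y, fs s y * g y ^ 2 ≤ ∫ y, Mf * g y ^ 2 := by
      apply integral_mono_of_nonneg
      · exact Filter.Eventually.of_forall fun y => mul_nonneg (hfs0 s y) (sq_nonneg _)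
      · exact hg2int.const_mul Mf
      · exact Filter.Eventually.of_forall fun y =>
          mul_le_mul_of_nonneg_right (hMf s hs y) (sq_nonneg _)
    rw [integral_const_mul] at h4
    exact h4
  -- cross moment bound
  have hsqint : ∀ i s, Integrable (fun ω => g (X i s ω) ^ 2) P := fun i s => by
    apply intOfBdd ((hGsm i s).pow_const 2).aestronglyMeasurable (C := Cg ^ 2)
    intro ω
    rw [abs_pow, sq, sq]
    exact mul_le_mul (hgabs _) (hgabs _) (abs_nonneg _) hCg0
  have hI2le : ∀ i j, ∀ s ∈ Set.Icc t₀ T, ∀ t ∈ Set.Icc t₀ T,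
      ∫ ω, g (X i s ω) * g (X j t ω) ∂P ≤ Mf * ∫ y, g y ^ 2 := by
    intro i j s hs t ht
    have step : ∫ ω, g (X i s ω) * g (X j t ω) ∂P
        ≤ ∫ ω, (g (X i s ω) ^ 2 + g (X j t ω) ^ 2) / 2 ∂P := by
      apply integral_mono_of_nonneg
      · exact Filter.Eventually.of_forall fun ω => mul_nonneg (hg0 _) (hg0 _)
      · exact ((hsqint i s).add (hsqint j t)).div_const 2
      · exact Filter.Eventually.of_forall fun ω => by nlinarith [sq_nonneg (g (X i s ω) - g (X j t ω))]
    rw [integral_div, integral_add (hsqint i s) (hsqint j t)] at step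
    have := hmom2 i s hs
    have := hmom2 j t ht
    linarith
  -- independence factorization
  have hfact : ∀ i j, i ≠ j → ∀ s t : ℝ,
      ∫ ω, g (X i s ω) * g (X j t ω) ∂P
        = (∫ ω, g (X i s ω) ∂P) * ∫ ω, g (X j t ω) ∂P := by
    intro i j hij s t
    have h1 : IndepFun (fun ω => X i s ω) (fun ω => X j t ω) P :=
      (hindep.indepFun hij).comp (measurable_pi_apply s) (measurable_pi_apply t)
    have h2 : IndepFun (fun ω => g (X i s ω)) (fun ω => g (X j t ω)) P :=
      h1.comp hgcont.measurable hgcont.measurable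
    exact h2.integral_fun_mul_eq_mul_integral (hGsm i s).aestronglyMeasurable (hGsm j t).aestronglyMeasurable
  -- Fubini setup
  have hIntProd : ∀ i j, Integrable
      (fun q : Ω × (ℝ × ℝ) => g (X i q.2.1 q.1) * g (X j q.2.2 q.1)) (P.prod (ν.prod ν)) := by
    intro i j
    apply intOfBdd (C := Cg * Cg)
    · exact (((hGm i).comp (measurable_snd.fst.prodMk measurable_fst)).mul
        ((hGm j).comp (measurable_snd.snd.prodMk measurable_fst))).aestronglyMeasurable
    · intro q
      rw [abs_mul]
      exact mul_le_mul (hgabs _) (hgabs _) (abs_nonneg _) hCg0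
  have hswap : ∀ i j, ∫ ω, Y i ω * Y j ω ∂P
      = ∫ p : ℝ × ℝ, (∫ ω, g (X i p.1 ω) * g (X j p.2 ω) ∂P) ∂(ν.prod ν) := by
    intro i j
    have h1 : ∀ ω, Y i ω * Y j ω
        = ∫ p : ℝ × ℝ, g (X i p.1 ω) * g (X j p.2 ω) ∂(ν.prod ν) := fun ω =>
      (integral_prod_mul (μ := ν) (ν := ν)
        (fun s' => g (X i s' ω)) (fun t' => g (X j t' ω))).symm
    simp_rw [h1]
    exact integral_integral_swap (hIntProd i j)
  have hm1 : ∀ i, ∫ ω, Y i ω ∂P = ∫ s, (∫ ω, g (X i s ω) ∂P) ∂ν := by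
    intro i
    apply integral_integral_swap
    apply intOfBdd (C := Cg)
    · exact ((hGm i).comp (measurable_snd.prodMk measurable_fst)).aestronglyMeasurable
    · exact fun q => hgabs _
  -- off-diagonal terms
  have hoff : ∀ i j, i ≠ j →
      ∫ ω, Y i ω * Y j ω ∂P = (∫ ω, Y i ω ∂P) * ∫ ω, Y j ω ∂P := by
    intro i j hij
    rw [hswap i j, hm1 i, hm1 j, ← integral_prod_mul (μ := ν) (ν := ν)
      (fun s => ∫ ω, g (X i s ω) ∂P) (fun t => ∫ ω, g (X j t ω) ∂P)]
    apply integral_congr_ae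
    exact Filter.Eventually.of_forall fun p => hfact i j hij p.1 p.2
  -- diagonal bound
  have hν2univ : ((ν.prod ν) Set.univ).toReal = T₀ * T₀ := by
    rw [← Set.univ_prod_univ, Measure.prod_prod, ENNReal.toReal_mul, hνunivR]
  have hdiag : ∀ i, ∫ ω, Y i ω * Y i ω ∂P ≤ T₀ * T₀ * (Mf * ∫ y, g y ^ 2) := by
    intro i
    rw [hswap i i]
    have hae : ∀ᵐ p : ℝ × ℝ ∂(ν.prod ν),
        (∫ ω, g (X i p.1 ω) * g (X i p.2 ω) ∂P) ≤ Mf * ∫ y, g y ^ 2 := by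
      have hr : ν.prod ν = (volume.prod volume).restrict ((Set.Ioc t₀ T) ×ˢ (Set.Ioc t₀ T)) := by
        rw [hνdef, Measure.prod_restrict]
      rw [hr]
      filter_upwards [ae_restrict_mem (measurableSet_Ioc.prod measurableSet_Ioc)] with p hp
      exact hI2le i i p.1 (Set.Ioc_subset_Icc_self hp.1) p.2 (Set.Ioc_subset_Icc_self hp.2)
    calc (∫ p : ℝ × ℝ, (∫ ω, g (X i p.1 ω) * g (X i p.2 ω) ∂P) ∂(ν.prod ν))
        ≤ ∫ _p : ℝ × ℝ, (Mf * ∫ y, g y ^ 2) ∂(ν.prod ν) := by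
          apply integral_mono_of_nonneg
          · exact Filter.Eventually.of_forall fun p =>
              integral_nonneg fun ω => mul_nonneg (hg0 _) (hg0 _)
          · exact integrable_const _
          · exact hae
      _ = T₀ * T₀ * (Mf * ∫ y, g y ^ 2) := by
          rw [integral_const, smul_eq_mul, measureReal_def, hν2univ]
  -- rewrite the estimator
  set c : ℝ := 1 / (N * T₀) with hcdef
  have hZ : densEst K t₀ T η N X x = fun ω => c * ∑ i, Y i ω := by
    funext ω
    unfold densEst
    congr 1
    apply Finset.sum_congr rfl
    intro i _
    rw [intervalIntegral.integral_of_le htT.le]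
    rfl
  -- MemLp
  have hZsm : StronglyMeasurable (densEst K t₀ T η N X x) := by
    rw [hZ]
    exact (stronglyMeasurable_const.mul (Finset.stronglyMeasurable_fun_sum _ fun i _ => hYsm i))
  have hZb : ∀ ω, ‖densEst K t₀ T η N X x ω‖ ≤ |c| * (N * (Cg * T₀)) := by
    intro ω
    rw [hZ]
    simp only [Real.norm_eq_abs, abs_mul]
    apply mul_le_mul_of_nonneg_left _ (abs_nonneg c)
    calc |∑ i, Y i ω| ≤ ∑ i, |Y i ω| := Finset.abs_sum_le_sum_abs _ _
      _ ≤ ∑ _i : Fin N, (Cg * T₀) := Finset.sum_le_sum fun i _ => hYb i ω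
      _ = N * (Cg * T₀) := by rw [Finset.sum_const, Finset.card_univ, Fintype.card_fin,
            nsmul_eq_mul]
  have hMem : MemLp (densEst K t₀ T η N X x) 2 P :=
    MemLp.of_bound hZsm.aestronglyMeasurable _ (Filter.Eventually.of_forall hZb)
  rw [variance_eq_sub hMem]
  -- compute the two expectations
  have hE2 : ∫ ω, (densEst K t₀ T η N X x ω) ^ 2 ∂P
      = c ^ 2 * ∑ i, ∑ j, ∫ ω, Y i ω * Y j ω ∂P := by
    have h1 : ∀ ω, (densEst K t₀ T η N X x ω) ^ 2
        = c ^ 2 * ∑ i, ∑ j, Y i ω * Y j ω := by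
      intro ω
      rw [hZ]
      simp only
      rw [mul_pow, sq (∑ i, Y i ω), Finset.sum_mul_sum]
    simp_rw [h1]
    rw [integral_const_mul, integral_finset_sum _ fun i _ =>
      integrable_finset_sum _ fun j _ => hYYint i j]
    congr 1
    apply Finset.sum_congr rfl
    intro i _
    rw [integral_finset_sum _ fun j _ => hYYint i j]
  have hE1 : ∫ ω, densEst K t₀ T η N X x ω ∂P = c * ∑ i, ∫ ω, Y i ω ∂P := by
    rw [hZ]
    simp only
    rw [integral_const_mul, integral_finset_sum _ fun i _ => hYint i]
  have hkey : ∀ i j, (∫ ω, Y i ω * Y j ω ∂P) - (∫ ω, Y i ω ∂P) * (∫ ω, Y j ω ∂P)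
      ≤ if i = j then T₀ * T₀ * (Mf * ∫ y, g y ^ 2) else 0 := by
    intro i j
    by_cases hij : i = j
    · subst hij
      rw [if_pos rfl]
      have h1 := hdiag i
      nlinarith [mul_self_nonneg (∫ ω, Y i ω ∂P)]
    · simp only [if_neg hij]
      rw [hoff i j hij]
      simp
  -- put everything together
  have hvar : (∫ ω, (densEst K t₀ T η N X x ω) ^ 2 ∂P)
      - (∫ ω, densEst K t₀ T η N X x ω ∂P) ^ 2
      ≤ c ^ 2 * (N * (T₀ * T₀ * (Mf * ∫ y, g y ^ 2))) := by
    rw [hE2, hE1, mul_pow, sq (∑ i, ∫ ω, Y i ω ∂P), Finset.sum_mul_sum, ← mul_sub]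
    apply mul_le_mul_of_nonneg_left _ (sq_nonneg c)
    rw [← Finset.sum_sub_distrib]
    simp_rw [← Finset.sum_sub_distrib]
    calc (∑ i, ∑ j, ((∫ ω, Y i ω * Y j ω ∂P) - (∫ ω, Y i ω ∂P) * ∫ ω, Y j ω ∂P))
        ≤ ∑ i, ∑ j, (if i = j then T₀ * T₀ * (Mf * ∫ y, g y ^ 2) else 0) :=
          Finset.sum_le_sum fun i _ => Finset.sum_le_sum fun j _ => hkey i j
      _ = ∑ _i : Fin N, T₀ * T₀ * (Mf * ∫ y, g y ^ 2) := by
          apply Finset.sum_congr rfl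
          intro i _
          simp
      _ = N * (T₀ * T₀ * (Mf * ∫ y, g y ^ 2)) := by
          rw [Finset.sum_const, Finset.card_univ, Fintype.card_fin, nsmul_eq_mul]
  have hfinal : c ^ 2 * (N * (T₀ * T₀ * (Mf * ∫ y, g y ^ 2)))
      = Mf * (∫ y, K y ^ 2) / (N * η) := by
    rw [hIg2, hcdef]
    have hNpos : (0 : ℝ) < N := Nat.cast_pos.2 hN
    field_simp
  -- conclude
  have hexp : (∫ ω, (densEst K t₀ T η N X x ω) ^ 2 ∂P)
      - (∫ ω, densEst K t₀ T η N X x ω ∂P) ^ 2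
      ≤ Mf * (∫ y, K y ^ 2) / (N * η) := hfinal ▸ hvar
  convert hexp using 2 <;> simp [Pi.pow_apply]
end

section
/- Let m ∈ (0,1], let φ, γ ∈ ℝ with φ ≥ m, and set a = γ/φ. Let F and G be square-integrable real random variables on a probability space (Ω, 𝓕, P), and define Â = (G/F) · 1_{F > m/2}. Then E(|Â − a|²) ≤ (8/m²) E(|G − γ|²) + ( 8γ²/m⁴ + 9γ²/(φ² m²) ) E(|F − φ|²). -/
open MeasureTheory

/-!
On `{F > m/2}` write `G/F - γ/φ = (G - γ)/F + (γ/φ)(φ - F)/F` and use `1/F < 2/m`; on `{F ≤ m/2}`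
the estimate is `0`, and `|F - φ| ≥ m/2` there because `φ ≥ m`. Both cases give the pointwise bound
`(Â - γ/φ)² ≤ (8/m²)((G - γ)² + (γ/φ)²(F - φ)²)`, which is integrated.
-/

lemma sq_div_sub_div_le_of_half_lt {m φ γ g u : ℝ} (hm : 0 < m) (hφ : φ ≠ 0) (hu : m / 2 < u) :
    (g / u - γ / φ) ^ 2 ≤ 8 / m ^ 2 * ((g - γ) ^ 2 + (γ / φ) ^ 2 * (u - φ) ^ 2) := by
  have hu0 : 0 < u := lt_trans (by positivity) hu
  have hinv : (1 / u) ^ 2 ≤ 4 / m ^ 2 := by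
    calc (1 / u) ^ 2 ≤ (1 / (m / 2)) ^ 2 := by gcongr
      _ = 4 / m ^ 2 := by ring
  calc (g / u - γ / φ) ^ 2 = ((g - γ) * (1 / u) + γ / φ * (φ - u) * (1 / u)) ^ 2 := by
        field_simp; ring
    _ ≤ 2 * ((g - γ) ^ 2 * (1 / u) ^ 2 + (γ / φ) ^ 2 * (u - φ) ^ 2 * (1 / u) ^ 2) := by
        refine add_sq_le.trans_eq ?_
        ring
    _ ≤ 2 * ((g - γ) ^ 2 * (4 / m ^ 2) + (γ / φ) ^ 2 * (u - φ) ^ 2 * (4 / m ^ 2)) := by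
        gcongr
    _ = 8 / m ^ 2 * ((g - γ) ^ 2 + (γ / φ) ^ 2 * (u - φ) ^ 2) := by ring

lemma sq_le_mul_sq_sub_of_le_half {m φ u : ℝ} (c : ℝ) (hm : 0 < m) (hφ : m ≤ φ) (hu : u ≤ m / 2) :
    c ^ 2 ≤ 4 / m ^ 2 * (c ^ 2 * (u - φ) ^ 2) := by
  have hgap : m ^ 2 / 4 ≤ (u - φ) ^ 2 := by nlinarith
  calc c ^ 2 = 4 / m ^ 2 * (c ^ 2 * (m ^ 2 / 4)) := by field_simp
    _ ≤ 4 / m ^ 2 * (c ^ 2 * (u - φ) ^ 2) := by gcongr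

lemma sq_truncated_div_sub_div_le {m φ γ g u : ℝ} (hm : 0 < m) (hφ : m ≤ φ) :
    ((if m / 2 < u then g / u else 0) - γ / φ) ^ 2 ≤
      8 / m ^ 2 * ((g - γ) ^ 2 + (γ / φ) ^ 2 * (u - φ) ^ 2) := by
  split_ifs with hu
  · exact sq_div_sub_div_le_of_half_lt hm (by linarith) hu
  · have hbound := sq_le_mul_sq_sub_of_le_half (γ / φ) hm hφ (not_lt.mp hu)
    have hsplit : 8 / m ^ 2 * ((g - γ) ^ 2 + (γ / φ) ^ 2 * (u - φ) ^ 2) =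
        8 / m ^ 2 * (g - γ) ^ 2 + 2 * (4 / m ^ 2 * ((γ / φ) ^ 2 * (u - φ) ^ 2)) := by ring
    rw [zero_sub, neg_sq, hsplit]
    linarith [sq_nonneg (γ / φ), show 0 ≤ 8 / m ^ 2 * (g - γ) ^ 2 by positivity]

theorem stmt15_general (m φ γ : ℝ) (hm0 : 0 < m) (hφ : m ≤ φ)
    (Ω : Type) [MeasurableSpace Ω] (P : Measure Ω) [IsProbabilityMeasure P]
    (F G : Ω → ℝ) (hF : MemLp F 2 P) (hG : MemLp G 2 P) :
    (∫ ω, |Set.indicator {ω' : Ω | m / 2 < F ω'} (fun ω' => G ω' / F ω') ω - γ / φ| ^ 2 ∂P) ≤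
      (8 / m ^ 2) * (∫ ω, |G ω - γ| ^ 2 ∂P) +
        (8 * γ ^ 2 / m ^ 4 + 9 * γ ^ 2 / (φ ^ 2 * m ^ 2)) * ∫ ω, |F ω - φ| ^ 2 ∂P := by
  have hGint : Integrable (fun ω => (G ω - γ) ^ 2) P := (hG.sub (memLp_const γ)).integrable_sq
  have hFint : Integrable (fun ω => (F ω - φ) ^ 2) P := (hF.sub (memLp_const φ)).integrable_sq
  have hconst : 8 / m ^ 2 * (γ / φ) ^ 2 ≤ 8 * γ ^ 2 / m ^ 4 + 9 * γ ^ 2 / (φ ^ 2 * m ^ 2) := by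
    rw [div_pow, div_mul_div_comm, mul_comm (m ^ 2)]
    have : 8 * γ ^ 2 / (φ ^ 2 * m ^ 2) ≤ 9 * γ ^ 2 / (φ ^ 2 * m ^ 2) := by gcongr; norm_num
    linarith [show 0 ≤ 8 * γ ^ 2 / m ^ 4 by positivity]
  simp only [sq_abs, Set.indicator_apply, Set.mem_ofPred_eq]
  calc ∫ ω, ((if m / 2 < F ω then G ω / F ω else 0) - γ / φ) ^ 2 ∂P
      ≤ ∫ ω, 8 / m ^ 2 * ((G ω - γ) ^ 2 + (γ / φ) ^ 2 * (F ω - φ) ^ 2) ∂P :=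
        integral_mono_of_nonneg (ae_of_all _ fun _ => sq_nonneg _)
          ((hGint.add (hFint.const_mul _)).const_mul _)
          (ae_of_all _ fun _ => sq_truncated_div_sub_div_le hm0 hφ)
    _ = 8 / m ^ 2 * ∫ ω, (G ω - γ) ^ 2 ∂P + 8 / m ^ 2 * (γ / φ) ^ 2 * ∫ ω, (F ω - φ) ^ 2 ∂P := by
        rw [integral_const_mul, integral_add hGint (hFint.const_mul _), integral_const_mul]
        ring
    _ ≤ _ := by gcongr

/-- The ratio-estimator bound: if `Â = (G/F) 1_{F > m/2}` estimates `a = γ/φ` with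
`φ ≥ m`, then `E(|Â - a|²) ≤ (8/m²) E(|G - γ|²) + (8γ²/m⁴ + 9γ²/(φ²m²)) E(|F - φ|²)`. -/
theorem stmt15 (m φ γ : ℝ) (hm0 : 0 < m) (hm1 : m ≤ 1) (hφ : m ≤ φ)
    (Ω : Type) [MeasurableSpace Ω] (P : Measure Ω) [IsProbabilityMeasure P]
    (F G : Ω → ℝ) (hF : MemLp F 2 P) (hG : MemLp G 2 P) :
    (∫ ω, |Set.indicator {ω' : Ω | m / 2 < F ω'} (fun ω' => G ω' / F ω') ω - γ / φ| ^ 2 ∂P) ≤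
      (8 / m ^ 2) * (∫ ω, |G ω - γ| ^ 2 ∂P) +
        (8 * γ ^ 2 / m ^ 4 + 9 * γ ^ 2 / (φ ^ 2 * m ^ 2)) * ∫ ω, |F ω - φ| ^ 2 ∂P :=
  stmt15_general m φ γ hm0 hφ Ω P F G hF hG
end
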